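/- Let P = ∏_{h=-m}^{m-1} (α+1+2h) and w(r) = P^{(α-2m+1)/(4m)} (1+r²)^{-(α-2m+1)/2}. Then w is a positive solution of (-Δ_α)^m w = w^{2*-1} on (0,∞), where 2* = 2(α+1)/(α-2m+1). -/

import Mathlib

/-- The α-generalized radial Laplacian: Δ_α v(r) = v''(r) + (α/r) v'(r). -/
noncomputable def lapl (α : ℝ) (v : ℝ → ℝ) : ℝ → ℝ :=
  fun r => deriv (deriv v) r + (α / r) * deriv v r

/-- The m-fold iterate of -Δ_α. -/
noncomputable def negLaplIter (α : ℝ) (m : ℕ) : (ℝ → ℝ) → (ℝ → ℝ) :=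
  (fun v r => -(lapl α v r))^[m]

lemma hasDerivAt_base (c r : ℝ) :
    HasDerivAt (fun x : ℝ => (1 + x ^ 2) ^ c) (c * (1 + r ^ 2) ^ (c - 1) * (2 * r)) r := by
  have h1 : HasDerivAt (fun x : ℝ => 1 + x ^ 2) (2 * r) r := by
    simpa using (hasDerivAt_pow 2 r).const_add 1
  have h2 := (Real.hasDerivAt_rpow_const (x := 1 + r ^ 2) (p := c)
    (Or.inl (by positivity)))
  exact h2.comp r h1

lemma hasDerivAt_base' (c r : ℝ) :
    HasDerivAt (fun x : ℝ => x * (1 + x ^ 2) ^ c)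
      (1 * (1 + r ^ 2) ^ c + r * (c * (1 + r ^ 2) ^ (c - 1) * (2 * r))) r :=
  (hasDerivAt_id r).mul (hasDerivAt_base c r)

lemma lapl_congr (α : ℝ) {f g : ℝ → ℝ} {r : ℝ} (hr : 0 < r)
    (h : Set.EqOn f g (Set.Ioi 0)) : lapl α f r = lapl α g r := by
  have hmem : Set.Ioi (0:ℝ) ∈ nhds r := Ioi_mem_nhds hr
  have h1 : f =ᶠ[nhds r] g := Filter.eventuallyEq_of_mem hmem h
  have h2 : deriv f =ᶠ[nhds r] deriv g := h1.deriv
  simp only [lapl, h2.deriv_eq, h1.deriv_eq]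

lemma lapl_sum (α : ℝ) (N : ℕ) (a E : ℕ → ℝ) (r : ℝ) (hr : 0 < r) :
    -(lapl α (fun x => ∑ d ∈ Finset.range N, a d * (1 + x ^ 2) ^ (E d)) r)
      = ∑ d ∈ Finset.range N, a d *
          ((-(2 * E d * (α + 1) + 4 * E d * (E d - 1))) * (1 + r ^ 2) ^ (E d - 1)
            + (4 * E d * (E d - 1)) * (1 + r ^ 2) ^ (E d - 2)) := by
  have ht : (0:ℝ) < 1 + r ^ 2 := by positivity
  have hrne : r ≠ 0 := ne_of_gt hr
  have hd1 : deriv (fun x => ∑ d ∈ Finset.range N, a d * (1 + x ^ 2) ^ (E d))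
      = fun x => ∑ d ∈ Finset.range N, (2 * a d * E d) * (x * (1 + x ^ 2) ^ (E d - 1)) := by
    funext x
    have h := HasDerivAt.fun_sum (u := Finset.range N)
      (fun d _ => ((hasDerivAt_base (E d) x).const_mul (a d)))
    rw [h.deriv]
    exact Finset.sum_congr rfl fun d _ => by ring
  have hd2 : HasDerivAt
      (fun x : ℝ => ∑ d ∈ Finset.range N, (2 * a d * E d) * (x * (1 + x ^ 2) ^ (E d - 1)))
      (∑ d ∈ Finset.range N, (2 * a d * E d) *
        (1 * (1 + r ^ 2) ^ (E d - 1) + r * ((E d - 1) * (1 + r ^ 2) ^ (E d - 1 - 1) * (2 * r)))) r :=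
    HasDerivAt.fun_sum fun d _ => (hasDerivAt_base' (E d - 1) r).const_mul _
  simp only [lapl, hd1, hd2.deriv]
  rw [Finset.mul_sum, ← Finset.sum_add_distrib, ← Finset.sum_neg_distrib]
  refine Finset.sum_congr rfl fun d _ => ?_
  have h2 : (1 + r ^ 2) ^ (E d - 1) = (1 + r ^ 2) ^ (E d - 1 - 1) * (1 + r ^ 2) := by
    rw [← Real.rpow_add_one (ne_of_gt ht)]; ring_nf
  have h3 : (1 + r ^ 2) ^ (E d - 2) = (1 + r ^ 2) ^ (E d - 1 - 1) := by
    congr 1; ring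
  have hkey : r ^ 2 * (1 + r ^ 2) ^ (E d - 1 - 1)
      = (1 + r ^ 2) ^ (E d - 1) - (1 + r ^ 2) ^ (E d - 1 - 1) := by
    rw [h2]; ring
  have hc : α / r * (2 * a d * E d * (r * (1 + r ^ 2) ^ (E d - 1)))
      = α * (2 * a d * E d) * (1 + r ^ 2) ^ (E d - 1) := by
    field_simp
  rw [h3]
  linear_combination -hc - (4 * a d * E d * (E d - 1)) * hkey

noncomputable def cc (b : ℝ) (M : ℕ) : ℕ → ℕ → ℝ
  | 0, 0 => 1
  | 0, _+1 => 0
  | k+1, 0 => (4 * (b + k) * ((M : ℝ) - 1 - k)) * cc b M k 0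
  | k+1, d+1 => (4 * (b + (k:ℝ) + (d:ℝ) + 1) * ((M:ℝ) - 1 - (k:ℝ) - (d:ℝ) - 1)) * cc b M k (d+1)
      + (4 * (b + (k:ℝ) + (d:ℝ)) * (b + (k:ℝ) + (d:ℝ) + 1)) * cc b M k d

lemma cc_zero (b : ℝ) (M : ℕ) : ∀ k d, k < d → cc b M k d = 0 := by
  intro k
  induction k with
  | zero => intro d hd; match d, hd with | d+1, _ => rfl
  | succ k ih =>
    intro d hd
    match d, hd with
    | d+1, hd =>
      have h1 : cc b M k (d+1) = 0 := ih (d+1) (by omega)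
      have h2 : cc b M k d = 0 := ih d (by omega)
      show _ * cc b M k (d+1) + _ * cc b M k d = 0
      rw [h1, h2]; ring

lemma cc_closed (b : ℝ) (M : ℕ) : ∀ k d, d ≤ k →
    cc b M k d = 4 ^ k * (∏ i ∈ Finset.range (k + d), (b + i)) * (k.choose d)
      * (∏ i ∈ Finset.range (k - d), ((M : ℝ) - 1 - d - i)) := by
  intro k
  induction k with
  | zero =>
    intro d hd
    interval_cases d
    simp [cc]
  | succ k ih =>
    intro d hd
    match d with
    | 0 =>
      have h0 := ih 0 (Nat.zero_le k)
      show (4 * (b + k) * ((M : ℝ) - 1 - k)) * cc b M k 0 = _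
      rw [h0]
      simp only [Nat.add_zero, Nat.sub_zero, Nat.choose_zero_right, Finset.prod_range_succ]
      push_cast
      ring
    | d+1 =>
      show (4 * (b + (k:ℝ) + (d:ℝ) + 1) * ((M:ℝ) - 1 - (k:ℝ) - (d:ℝ) - 1)) * cc b M k (d+1)
          + (4 * (b + (k:ℝ) + (d:ℝ)) * (b + (k:ℝ) + (d:ℝ) + 1)) * cc b M k d = _
      have hdk : d ≤ k := by omega
      have ihd := ih d hdk
      have hch : ((d:ℝ) + 1) * (k.choose (d+1) : ℝ) = ((k:ℝ) - (d:ℝ)) * (k.choose d : ℝ) := by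
        have h := Nat.choose_succ_right_eq k d
        have h2 : ((k.choose (d+1) * (d+1) : ℕ) : ℝ) = ((k.choose d * (k - d) : ℕ) : ℝ) := by
          rw [h]
        push_cast [Nat.cast_sub hdk] at h2
        linarith
      have hpascal : (((k+1).choose (d+1) : ℕ) : ℝ)
          = (k.choose d : ℝ) + (k.choose (d+1) : ℝ) := by
        rw [Nat.choose_succ_succ]; push_cast; ring
      rcases Nat.lt_or_ge d k with hlt | hge
      · have hd1k : d + 1 ≤ k := hlt
        have ihd1 := ih (d+1) hd1k
        rw [ihd, ihd1]
        have hQ2 : (∏ i ∈ Finset.range (k + (d+1)), (b + (i:ℝ)))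
            = (∏ i ∈ Finset.range (k + d), (b + (i:ℝ))) * (b + (k:ℝ) + (d:ℝ)) := by
          rw [show k + (d+1) = (k + d) + 1 by omega, Finset.prod_range_succ]
          push_cast; ring
        have hQ3 : (∏ i ∈ Finset.range (k + 1 + (d+1)), (b + (i:ℝ)))
            = (∏ i ∈ Finset.range (k + d), (b + (i:ℝ))) * (b + (k:ℝ) + (d:ℝ))
              * (b + (k:ℝ) + (d:ℝ) + 1) := by
          rw [show k + 1 + (d+1) = (k + d) + 1 + 1 by omega, Finset.prod_range_succ,
            Finset.prod_range_succ]
          push_cast; ring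
        have hR1 : (∏ i ∈ Finset.range (k - d), ((M:ℝ) - 1 - (d:ℝ) - (i:ℝ)))
            = (∏ i ∈ Finset.range (k - (d+1)), ((M:ℝ) - 1 - ((d+1):ℕ) - (i:ℝ)))
              * ((M:ℝ) - 1 - (d:ℝ)) := by
          rw [show k - d = (k - (d+1)) + 1 by omega, Finset.prod_range_succ']
          congr 1
          · exact Finset.prod_congr rfl fun i _ => by push_cast; ring
          · push_cast; ring
        have hR3 : (∏ i ∈ Finset.range (k + 1 - (d+1)), ((M:ℝ) - 1 - ((d+1):ℕ) - (i:ℝ)))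
            = (∏ i ∈ Finset.range (k - (d+1)), ((M:ℝ) - 1 - ((d+1):ℕ) - (i:ℝ)))
              * ((M:ℝ) - 1 - (k:ℝ)) := by
          rw [show k + 1 - (d+1) = (k - (d+1)) + 1 by omega, Finset.prod_range_succ]
          congr 1
          push_cast [Nat.cast_sub hd1k]; ring
        rw [hQ2, hQ3, hR1, hR3]
        set Q1 := ∏ i ∈ Finset.range (k + d), (b + (i:ℝ)) with hq
        set R2 := ∏ i ∈ Finset.range (k - (d+1)), ((M:ℝ) - 1 - ((d+1):ℕ) - (i:ℝ)) with hr
        push_cast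
        linear_combination (-(4:ℝ)^(k+1) * Q1 * R2 * (b+(k:ℝ)+(d:ℝ)) * (b+(k:ℝ)+(d:ℝ)+1)) * hch
          + (-(4:ℝ)^(k+1) * Q1 * R2 * (b+(k:ℝ)+(d:ℝ)) * (b+(k:ℝ)+(d:ℝ)+1) * ((M:ℝ)-1-(k:ℝ)))
            * hpascal
      · have hdk' : k = d := by omega
        subst hdk'
        have hz : cc b M k (k+1) = 0 := cc_zero b M k (k+1) (by omega)
        rw [hz, ihd]
        have hQ : (∏ i ∈ Finset.range (k + 1 + (k+1)), (b + (i:ℝ)))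
            = (∏ i ∈ Finset.range (k + k), (b + (i:ℝ))) * (b + (k:ℝ) + (k:ℝ))
              * (b + (k:ℝ) + (k:ℝ) + 1) := by
          rw [show k + 1 + (k+1) = (k + k) + 1 + 1 by omega, Finset.prod_range_succ,
            Finset.prod_range_succ]
          push_cast; ring
        rw [hQ]
        simp only [Nat.choose_self, Nat.sub_self, Finset.range_zero, Finset.prod_empty,
          Nat.cast_one]
        ring

lemma cc_final_zero (b : ℝ) (m d : ℕ) (hd : d < m) : cc b m m d = 0 := by
  rw [cc_closed b m m d hd.le]
  have hmem : m - d - 1 ∈ Finset.range (m - d) := by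
    simp only [Finset.mem_range]; omega
  have hzero : ((m:ℝ) - 1 - (d:ℝ) - ((m - d - 1 : ℕ) : ℝ)) = 0 := by
    have : ((m - d - 1 : ℕ) : ℝ) = (m:ℝ) - (d:ℝ) - 1 := by
      rw [show m - d - 1 = m - (d+1) by omega]
      push_cast [Nat.cast_sub (show d + 1 ≤ m by omega)]
      ring
    rw [this]; ring
  rw [Finset.prod_eq_zero hmem hzero]
  ring

lemma cc_final (b : ℝ) (m : ℕ) :
    cc b m m m = 4 ^ m * ∏ i ∈ Finset.range (2 * m), (b + (i:ℝ)) := by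
  rw [cc_closed b m m m le_rfl]
  simp only [Nat.choose_self, Nat.sub_self, Finset.range_zero, Finset.prod_empty,
    Nat.cast_one, show m + m = 2 * m by omega]
  ring

theorem stmt_3 (m : ℕ) (hm : 1 ≤ m) (α : ℝ) (hα : -1 < α) (hS : α - 2 * m + 1 > 0)
    (P : ℝ) (hP : P = ∏ h ∈ Finset.range (2 * m), (α + 1 + 2 * ((h : ℝ) - m)))
    (w : ℝ → ℝ)
    (hw : w = fun r : ℝ => P ^ ((α - 2 * m + 1) / (4 * m)) * (1 + r ^ 2) ^ (-((α - 2 * m + 1) / 2))) :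
    ∀ r : ℝ, 0 < r →
      0 < w r ∧ negLaplIter α m w r = w r ^ ((α + 2 * m + 1) / (α - 2 * m + 1)) := by
  have hm0 : (0:ℝ) < (m:ℝ) := by exact_mod_cast hm
  set b : ℝ := (α - 2 * m + 1) / 2 with hb
  set K : ℝ := P ^ ((α - 2 * m + 1) / (4 * m)) with hK
  have hbpos : 0 < b := by rw [hb]; linarith
  have hPpos : 0 < P := by
    rw [hP]
    apply Finset.prod_pos
    intro h _
    have : (0:ℝ) ≤ (h:ℝ) := Nat.cast_nonneg h
    linarith
  have hKpos : 0 < K := Real.rpow_pos_of_pos hPpos _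
  have hab : α = 2 * b + 2 * (m:ℝ) - 1 := by rw [hb]; ring
  -- main induction
  have key : ∀ k, ∀ x ∈ Set.Ioi (0:ℝ), negLaplIter α k w x
      = ∑ d ∈ Finset.range (k+1),
          (K * cc b m k d) * (1 + x ^ 2) ^ (-(b + (k:ℝ) + (d:ℝ))) := by
    intro k
    induction k with
    | zero =>
      intro x _
      simp only [negLaplIter, Function.iterate_zero, id_eq]
      rw [hw, Finset.sum_range_one]
      show K * (1 + x ^ 2) ^ (-b) = K * cc b m 0 0 * (1 + x ^ 2) ^ (-(b + ((0:ℕ):ℝ) + ((0:ℕ):ℝ)))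
      rw [show cc b m 0 0 = 1 from rfl]
      norm_num
    | succ k ih =>
      intro x hx
      have hx' : (0:ℝ) < x := hx
      have hstep : negLaplIter α (k+1) w x = -(lapl α (negLaplIter α k w) x) := by
        simp only [negLaplIter, Function.iterate_succ_apply']
      rw [hstep]
      have hEq : Set.EqOn (negLaplIter α k w)
          (fun y => ∑ d ∈ Finset.range (k+1),
            (K * cc b m k d) * (1 + y ^ 2) ^ (-(b + (k:ℝ) + (d:ℝ)))) (Set.Ioi 0) :=
        fun y hy => ih y hy
      rw [lapl_congr α hx' hEq,
        lapl_sum α (k+1) (fun d => K * cc b m k d) (fun d => -(b + (k:ℝ) + (d:ℝ))) x hx']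
      -- reshuffle
      have hsplit : ∀ d ∈ Finset.range (k+2),
          (K * cc b m (k+1) d) * (1 + x ^ 2) ^ (-(b + ((k+1:ℕ):ℝ) + (d:ℝ)))
          = K * ((4 * (b + (k:ℝ) + (d:ℝ)) * ((m:ℝ) - 1 - (k:ℝ) - (d:ℝ))) * cc b m k d)
              * (1 + x ^ 2) ^ (-(b + ((k+1:ℕ):ℝ) + (d:ℝ)))
            + K * ((match d with
                | 0 => (0:ℝ)
                | d'+1 => (4 * (b + (k:ℝ) + (d':ℝ)) * (b + (k:ℝ) + (d':ℝ) + 1)) * cc b m k d') )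
              * (1 + x ^ 2) ^ (-(b + ((k+1:ℕ):ℝ) + (d:ℝ))) := by
        intro d _
        match d with
        | 0 =>
          show (K * cc b m (k+1) 0) * _ = _
          rw [show cc b m (k+1) 0 = (4 * (b + (k:ℝ)) * ((m : ℝ) - 1 - (k:ℝ))) * cc b m k 0
            from rfl]
          push_cast
          ring
        | d'+1 =>
          show (K * cc b m (k+1) (d'+1)) * _ = _
          rw [show cc b m (k+1) (d'+1)
            = (4 * (b + (k:ℝ) + (d':ℝ) + 1) * ((m:ℝ) - 1 - (k:ℝ) - (d':ℝ) - 1)) * cc b m k (d'+1)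
              + (4 * (b + (k:ℝ) + (d':ℝ)) * (b + (k:ℝ) + (d':ℝ) + 1)) * cc b m k d' from rfl]
          push_cast
          ring
      rw [Finset.sum_congr rfl hsplit, Finset.sum_add_distrib]
      -- first sum: drop last (zero) term
      have hA : (∑ d ∈ Finset.range (k+2),
            K * ((4 * (b + (k:ℝ) + (d:ℝ)) * ((m:ℝ) - 1 - (k:ℝ) - (d:ℝ))) * cc b m k d)
              * (1 + x ^ 2) ^ (-(b + ((k+1:ℕ):ℝ) + (d:ℝ))))
          = ∑ d ∈ Finset.range (k+1),
            K * ((4 * (b + (k:ℝ) + (d:ℝ)) * ((m:ℝ) - 1 - (k:ℝ) - (d:ℝ))) * cc b m k d)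
              * (1 + x ^ 2) ^ (-(b + ((k+1:ℕ):ℝ) + (d:ℝ))) := by
        rw [Finset.sum_range_succ, cc_zero b m k (k+1) (by omega)]
        ring
      -- second sum: shift index
      have hB : (∑ d ∈ Finset.range (k+2),
            K * ((match d with
                | 0 => (0:ℝ)
                | d'+1 => (4 * (b + (k:ℝ) + (d':ℝ)) * (b + (k:ℝ) + (d':ℝ) + 1)) * cc b m k d'))
              * (1 + x ^ 2) ^ (-(b + ((k+1:ℕ):ℝ) + (d:ℝ))))
          = ∑ d ∈ Finset.range (k+1),
            K * ((4 * (b + (k:ℝ) + (d:ℝ)) * (b + (k:ℝ) + (d:ℝ) + 1)) * cc b m k d)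
              * (1 + x ^ 2) ^ (-(b + ((k+1:ℕ):ℝ) + ((d+1:ℕ):ℝ))) := by
        rw [Finset.sum_range_succ']
        norm_num
      rw [hA, hB, ← Finset.sum_add_distrib]
      refine Finset.sum_congr rfl fun d _ => ?_
      have he1 : (1 + x ^ 2) ^ (-(b + ((k+1:ℕ):ℝ) + (d:ℝ)))
          = (1 + x ^ 2) ^ (-(b + (k:ℝ) + (d:ℝ)) - 1) := by
        congr 1; push_cast; ring
      have he2 : (1 + x ^ 2) ^ (-(b + ((k+1:ℕ):ℝ) + ((d+1:ℕ):ℝ)))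
          = (1 + x ^ 2) ^ (-(b + (k:ℝ) + (d:ℝ)) - 2) := by
        congr 1; push_cast; ring
      rw [he1, he2, hab]
      ring
  -- conclude
  intro r hr
  have ht : (0:ℝ) < 1 + r ^ 2 := by positivity
  have hwr : w r = K * (1 + r ^ 2) ^ (-b) := by rw [hw]
  have htp : (0:ℝ) < (1 + r ^ 2) ^ (-b) := Real.rpow_pos_of_pos ht _
  constructor
  · rw [hwr]; exact mul_pos hKpos htp
  · have hmain := key m r hr
    rw [hmain, Finset.sum_range_succ, Finset.sum_eq_zero (fun d hd => by
      rw [cc_final_zero b m d (Finset.mem_range.mp hd)]; ring), cc_final, zero_add]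
    -- RHS computation
    have hprod : ∏ h ∈ Finset.range (2 * m), (α + 1 + 2 * ((h:ℝ) - (m:ℝ)))
        = ∏ h ∈ Finset.range (2 * m), (2 * (b + (h:ℝ))) :=
      Finset.prod_congr rfl (fun h _ => by rw [hb]; ring)
    have hP4 : P = 4 ^ m * ∏ i ∈ Finset.range (2 * m), (b + (i:ℝ)) := by
      rw [hP, hprod, Finset.prod_mul_distrib, Finset.prod_const, Finset.card_range, pow_mul]
      norm_num
    have hSne : α - 2 * (m:ℝ) + 1 ≠ 0 := ne_of_gt hS
    have hmne : (m:ℝ) ≠ 0 := ne_of_gt hm0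
    rw [hwr, Real.mul_rpow hKpos.le htp.le]
    have h1 : ((1 + r ^ 2) ^ (-b)) ^ ((α + 2 * (m:ℝ) + 1) / (α - 2 * (m:ℝ) + 1))
        = (1 + r ^ 2) ^ (-(b + (m:ℝ) + (m:ℝ))) := by
      rw [← Real.rpow_mul ht.le]
      congr 1
      rw [hb]
      field_simp
      ring
    have h2 : K ^ ((α + 2 * (m:ℝ) + 1) / (α - 2 * (m:ℝ) + 1)) = K * P := by
      rw [hK, ← Real.rpow_mul hPpos.le]
      have hx : (α - 2 * (m:ℝ) + 1) / (4 * (m:ℝ)) * ((α + 2 * (m:ℝ) + 1) / (α - 2 * (m:ℝ) + 1))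
          = (α - 2 * (m:ℝ) + 1) / (4 * (m:ℝ)) + 1 := by
        field_simp
        ring
      rw [hx, Real.rpow_add hPpos, Real.rpow_one]
    rw [h1, h2, hP4]
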